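/- Let E and F be real inner product spaces, W : E →L[ℝ] F a continuous linear map, μ₀, μ₁ ∈ E, and Q_s, Q_c ∈ ℝ with 2·Q_s + 2·Q_c − 2 ≠ 0 and W (μ₀ − μ₁) ≠ 0. Set F₁ := (Q_s + Q_c) • W and G₁ := (2 − Q_s − Q_c) • W. Let (Ω, μ) be a probability space and ΔX₀, ΔX₁ : Ω → E measurable functions such that ω ↦ ‖W (ΔX₀ ω)‖² and ω ↦ ‖W (ΔX₁ ω)‖² are integrable. Define T₀² := ∫ ‖F₁ (ΔX₀ ω)‖² dμ + ∫ ‖G₁ (ΔX₁ ω)‖² dμ, T₁² := ∫ ‖G₁ (ΔX₀ ω)‖² dμ + ∫ ‖F₁ (ΔX₁ ω)‖² dμ, M² := (2·Q_s + 2·Q_c − 2)² · ‖W (μ₀ − μ₁)‖², and C₀ := 2 · (∫ ‖W (ΔX₀ ω)‖² dμ + ∫ ‖W (ΔX₁ ω)‖² dμ) / ‖W (μ₀ − μ₁)‖². Then (T₀² + T₁²) / M² ≥ C₀ / (2·Q_s + 2·Q_c − 2)². -/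
import Mathlib


open MeasureTheory

theorem stmt_5 {E F : Type*} [NormedAddCommGroup E] [InnerProductSpace ℝ E]
    [NormedAddCommGroup F] [InnerProductSpace ℝ F]
    [MeasurableSpace E]
    (W : E →L[ℝ] F) (μ₀ μ₁ : E) (Qs Qc : ℝ)
    (hQ : 2 * Qs + 2 * Qc - 2 ≠ 0) (hW : W (μ₀ - μ₁) ≠ 0)
    (F₁ G₁ : E →L[ℝ] F)
    (hF₁ : F₁ = (Qs + Qc) • W) (hG₁ : G₁ = (2 - Qs - Qc) • W)
    {Ω : Type*} [MeasurableSpace Ω] (μ : Measure Ω) [IsProbabilityMeasure μ]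
    (ΔX₀ ΔX₁ : Ω → E) (hX₀ : Measurable ΔX₀) (hX₁ : Measurable ΔX₁)
    (h0 : Integrable (fun ω => ‖W (ΔX₀ ω)‖ ^ 2) μ)
    (h1 : Integrable (fun ω => ‖W (ΔX₁ ω)‖ ^ 2) μ)
    (T₀sq T₁sq Msq C₀ : ℝ)
    (hT₀ : T₀sq = (∫ ω, ‖F₁ (ΔX₀ ω)‖ ^ 2 ∂μ) + (∫ ω, ‖G₁ (ΔX₁ ω)‖ ^ 2 ∂μ))
    (hT₁ : T₁sq = (∫ ω, ‖G₁ (ΔX₀ ω)‖ ^ 2 ∂μ) + (∫ ω, ‖F₁ (ΔX₁ ω)‖ ^ 2 ∂μ))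
    (hM : Msq = (2 * Qs + 2 * Qc - 2) ^ 2 * ‖W (μ₀ - μ₁)‖ ^ 2)
    (hC₀ : C₀ = 2 * ((∫ ω, ‖W (ΔX₀ ω)‖ ^ 2 ∂μ) + (∫ ω, ‖W (ΔX₁ ω)‖ ^ 2 ∂μ)) /
      ‖W (μ₀ - μ₁)‖ ^ 2) :
    (T₀sq + T₁sq) / Msq ≥ C₀ / (2 * Qs + 2 * Qc - 2) ^ 2 := by
  set a := Qs + Qc with ha
  set I0 := ∫ ω, ‖W (ΔX₀ ω)‖ ^ 2 ∂μ with hI0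
  set I1 := ∫ ω, ‖W (ΔX₁ ω)‖ ^ 2 ∂μ with hI1
  have hI0nn : 0 ≤ I0 := integral_nonneg fun ω => by positivity
  have hI1nn : 0 ≤ I1 := integral_nonneg fun ω => by positivity
  have key : ∀ (c : ℝ) (X : Ω → E),
      (∫ ω, ‖(c • W) (X ω)‖ ^ 2 ∂μ) = c ^ 2 * ∫ ω, ‖W (X ω)‖ ^ 2 ∂μ := by
    intro c X
    rw [← integral_const_mul]
    congr 1
    ext ω
    simp [norm_smul, mul_pow, sq_abs]
  have hF0 := key a ΔX₀
  have hF1 := key a ΔX₁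
  have hG0 := key (2 - a) ΔX₀
  have hG1 := key (2 - a) ΔX₁
  have hsum : T₀sq + T₁sq = (a ^ 2 + (2 - a) ^ 2) * (I0 + I1) := by
    rw [hT₀, hT₁, hF₁, hG₁]
    have : (2 : ℝ) - Qs - Qc = 2 - a := by ring
    rw [this, hF0, hF1, hG0, hG1]; ring
  have hq : (0 : ℝ) < (2 * Qs + 2 * Qc - 2) ^ 2 := by positivity
  have hw : (0 : ℝ) < ‖W (μ₀ - μ₁)‖ ^ 2 := by
    have : ‖W (μ₀ - μ₁)‖ ≠ 0 := norm_ne_zero_iff.mpr hW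
    positivity
  rw [ge_iff_le, hC₀, hM, hsum, div_div, div_le_div_iff₀ (mul_pos hw hq) (mul_pos hq hw)]
  have h2 : (2 : ℝ) ≤ a ^ 2 + (2 - a) ^ 2 := by nlinarith [sq_nonneg (a - 1)]
  have hP : (0 : ℝ) ≤ (I0 + I1) * (‖W (μ₀ - μ₁)‖ ^ 2 * (2 * Qs + 2 * Qc - 2) ^ 2) :=
    mul_nonneg (add_nonneg hI0nn hI1nn) (mul_nonneg hw.le hq.le)
  have := mul_le_mul_of_nonneg_right h2 hP
  linear_combination this
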